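/- arXiv:2502.18135 — 12 statements merged into one kernel-verified Lean document; each statement's English description precedes it below -/
import Mathlib

section
/- If y ∈ ℝⁿ is a stationary point of f, i.e. ‖y‖²·y − D·y + b = 0, then the vector v = (y², y, 1) ∈ ℝ^{2n+1}, where y² denotes the coordinatewise square of y, satisfies M·v = ‖y‖²·v; in particular ‖y‖² is a real eigenvalue of M with eigenvector v. -/
open Matrix

noncomputable def Mmat {n : ℕ} (D b : Fin n → ℝ) :
    Matrix (Fin n ⊕ Fin n ⊕ Unit) (Fin n ⊕ Fin n ⊕ Unit) ℝ :=
  Matrix.of fun i j =>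
    match i, j with
    | Sum.inl i, Sum.inl j => if i = j then D i else 0
    | Sum.inl i, Sum.inr (Sum.inl j) => if i = j then -b i else 0
    | Sum.inl _, Sum.inr (Sum.inr _) => 0
    | Sum.inr (Sum.inl _), Sum.inl _ => 0
    | Sum.inr (Sum.inl i), Sum.inr (Sum.inl j) => if i = j then D i else 0
    | Sum.inr (Sum.inl i), Sum.inr (Sum.inr _) => -b i
    | Sum.inr (Sum.inr _), Sum.inl _ => 1
    | Sum.inr (Sum.inr _), Sum.inr _ => 0

/-- `f(y) = (1/4)‖y‖⁴ − (1/2) yᵀ D y + bᵀ y`. -/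
noncomputable def fD {n : ℕ} (D b : Fin n → ℝ) (y : Fin n → ℝ) : ℝ :=
  (1/4) * (y ⬝ᵥ y)^2 - (1/2) * (y ⬝ᵥ (Matrix.diagonal D *ᵥ y)) + b ⬝ᵥ y

theorem stmt0 {n : ℕ} (hn : 0 < n) (D b : Fin n → ℝ) (hD : Antitone D)
    (y : Fin n → ℝ)
    (hstat : (y ⬝ᵥ y) • y - Matrix.diagonal D *ᵥ y + b = 0) :
    let v : Fin n ⊕ Fin n ⊕ Unit → ℝ :=
      Sum.elim (fun k => (y k) ^ 2) (Sum.elim y fun _ => 1)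
    Mmat D b *ᵥ v = (y ⬝ᵥ y) • v ∧ v ≠ 0 := by
  intro v
  have hpt : ∀ i, (y ⬝ᵥ y) * y i - D i * y i + b i = 0 := by
    intro i
    have := congrFun hstat i
    simpa [Matrix.mulVec_diagonal] using this
  constructor
  · funext j
    cases j with
    | inl i =>
      have h := hpt i
      simp [Mmat, mulVec, dotProduct, Fintype.sum_sum_type, v,
        Finset.sum_ite_eq, apply_ite (· * y _), apply_ite (· * y _ ^ 2)]
      simp only [dotProduct] at h
      linear_combination (-(y i)) * h
    | inr j =>
      cases j with
      | inl i =>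
        have h := hpt i
        simp only [dotProduct] at h
        simp [Mmat, mulVec, dotProduct, Fintype.sum_sum_type, v,
          Finset.sum_ite_eq, apply_ite (· * y _)]
        linarith
      | inr u =>
        simp [Mmat, mulVec, dotProduct, Fintype.sum_sum_type, v, sq]
  · intro h
    have := congrFun h (Sum.inr (Sum.inr ()))
    simp [v] at this
end

section
/- If λ ∈ ℝ is an eigenvalue of M and λI − D is invertible, then y = −(λI − D)⁻¹ b satisfies ‖y‖² y − D y + b = 0 and ‖y‖² = λ; moreover, y is the unique point of ℝⁿ satisfying these two conditions, i.e. it is the unique stationary point of f with ‖y‖² = λ. -/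
open Matrix

theorem stmt2 {n : ℕ} (hn : 0 < n) (D b : Fin n → ℝ) (hD : Antitone D)
    (lam : ℝ)
    (heig : ∃ v : Fin n ⊕ Fin n ⊕ Unit → ℝ, v ≠ 0 ∧ Mmat D b *ᵥ v = lam • v)
    (hinv : IsUnit (lam • (1 : Matrix (Fin n) (Fin n) ℝ) - Matrix.diagonal D)) :
    let y : Fin n → ℝ :=
      -((lam • (1 : Matrix (Fin n) (Fin n) ℝ) - Matrix.diagonal D)⁻¹ *ᵥ b)
    ((y ⬝ᵥ y) • y - Matrix.diagonal D *ᵥ y + b = 0 ∧ y ⬝ᵥ y = lam) ∧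
      ∀ z : Fin n → ℝ,
        (z ⬝ᵥ z) • z - Matrix.diagonal D *ᵥ z + b = 0 → z ⬝ᵥ z = lam → z = y := by
  intro y
  have hydef : y = -((lam • (1 : Matrix (Fin n) (Fin n) ℝ) - Matrix.diagonal D)⁻¹ *ᵥ b) := rfl
  set d : Fin n → ℝ := fun i => lam - D i with hd_def
  have hA : lam • (1 : Matrix (Fin n) (Fin n) ℝ) - Matrix.diagonal D = Matrix.diagonal d := by
    ext i j
    by_cases h : i = j <;>
      simp [Matrix.diagonal, Matrix.one_apply, h, hd_def]
  have hinv' : IsUnit d := by rwa [hA, Matrix.isUnit_diagonal] at hinv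
  have hdinv : ∀ i, d i * Ring.inverse d i = 1 := by
    intro i
    simpa using congrFun (Ring.mul_inverse_cancel d hinv') i
  have hd : ∀ i, d i ≠ 0 := fun i => left_ne_zero_of_mul_eq_one (hdinv i)
  have hy : ∀ i, (lam - D i) * y i = - b i := by
    intro i
    have hyi : y i = -(Ring.inverse d i * b i) := by
      rw [hydef, hA, Matrix.inv_diagonal]
      simp [Matrix.mulVec_diagonal]
    have hgoal : d i * y i = - b i := by
      rw [hyi]; linear_combination (-b i) * hdinv i
    exact hgoal
  -- eigenvector analysis
  obtain ⟨v, hv0, hv⟩ := heig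
  set u : Fin n → ℝ := fun i => v (Sum.inl i) with hu_def
  set w : Fin n → ℝ := fun i => v (Sum.inr (Sum.inl i)) with hw_def
  set t : ℝ := v (Sum.inr (Sum.inr ())) with ht_def
  have e1 : ∀ i, D i * u i - b i * w i = lam * u i := by
    intro i
    have := congrFun hv (Sum.inl i)
    simpa [Mmat, Matrix.mulVec, dotProduct, Fintype.sum_sum_type, ite_mul,
      hu_def, hw_def, sub_eq_add_neg] using this
  have e2 : ∀ i, D i * w i - b i * t = lam * w i := by
    intro i
    have := congrFun hv (Sum.inr (Sum.inl i))
    simpa [Mmat, Matrix.mulVec, dotProduct, Fintype.sum_sum_type, ite_mul,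
      hw_def, ht_def, sub_eq_add_neg] using this
  have e3 : (∑ i, u i) = lam * t := by
    have := congrFun hv (Sum.inr (Sum.inr ()))
    simpa [Mmat, Matrix.mulVec, dotProduct, Fintype.sum_sum_type,
      hu_def, ht_def] using this
  have hw : ∀ i, w i = t * y i := by
    intro i
    have h1 : (lam - D i) * w i = (lam - D i) * (t * y i) := by
      linear_combination (-1 : ℝ) * e2 i - t * hy i
    exact mul_left_cancel₀ (hd i) h1
  have hu : ∀ i, u i = t * (y i * y i) := by
    intro i
    have h1 : (lam - D i) * u i = (lam - D i) * (t * (y i * y i)) := by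
      linear_combination (-1 : ℝ) * e1 i - b i * hw i - t * y i * hy i
    exact mul_left_cancel₀ (hd i) h1
  have ht : t ≠ 0 := by
    intro ht0
    apply hv0
    funext j
    match j with
    | Sum.inl i => simpa using (hu i).trans (by rw [ht0]; ring)
    | Sum.inr (Sum.inl i) => simpa using (hw i).trans (by rw [ht0]; ring)
    | Sum.inr (Sum.inr ()) => simpa using ht0
  have hyy : y ⬝ᵥ y = lam := by
    have hsum : t * (∑ i, y i * y i) = lam * t := by
      rw [← e3, Finset.mul_sum]
      exact Finset.sum_congr rfl fun i _ => (hu i).symm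
    have h2 : (∑ i, y i * y i) = lam := by
      have := mul_left_cancel₀ ht (by linarith [hsum] : t * (∑ i, y i * y i) = t * lam)
      linarith [this]
    simpa [dotProduct] using h2
  have hstat : (y ⬝ᵥ y) • y - Matrix.diagonal D *ᵥ y + b = 0 := by
    funext i
    simp only [Pi.add_apply, Pi.sub_apply, Pi.smul_apply, smul_eq_mul,
      Matrix.mulVec_diagonal, Pi.zero_apply, hyy]
    linear_combination hy i
  refine ⟨⟨hstat, hyy⟩, fun z hz1 hz2 => ?_⟩
  funext i
  have h1 := congrFun hz1 i
  simp only [Pi.add_apply, Pi.sub_apply, Pi.smul_apply, smul_eq_mul,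
    Matrix.mulVec_diagonal, Pi.zero_apply, hz2] at h1
  have h2 : (lam - D i) * z i = (lam - D i) * y i := by
    linear_combination h1 - hy i
  exact mul_left_cancel₀ (hd i) h2
end

section
/- Let λ ∈ ℝ and suppose y_p ∈ ℝⁿ satisfies (λI − D) y_p = −b and y_p is orthogonal to the kernel of λI − D. Then the set of stationary points of f with squared norm λ, namely { y ∈ ℝⁿ : ‖y‖² y − D y + b = 0 and ‖y‖² = λ }, equals the set { y_p + y_h : y_h ∈ ker(λI − D) and ‖y_h‖² = λ − ‖y_p‖² }. -/
open Matrix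

theorem stmt4 {n : ℕ} (hn : 0 < n) (D b : Fin n → ℝ) (hD : Antitone D)
    (lam : ℝ) (yp : Fin n → ℝ)
    (hyp : (lam • (1 : Matrix (Fin n) (Fin n) ℝ) - Matrix.diagonal D) *ᵥ yp = -b)
    (horth : ∀ z : Fin n → ℝ,
      (lam • (1 : Matrix (Fin n) (Fin n) ℝ) - Matrix.diagonal D) *ᵥ z = 0 → yp ⬝ᵥ z = 0) :
    {y : Fin n → ℝ |
        (y ⬝ᵥ y) • y - Matrix.diagonal D *ᵥ y + b = 0 ∧ y ⬝ᵥ y = lam}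
      = {y : Fin n → ℝ | ∃ yh : Fin n → ℝ,
          (lam • (1 : Matrix (Fin n) (Fin n) ℝ) - Matrix.diagonal D) *ᵥ yh = 0 ∧
          yh ⬝ᵥ yh = lam - yp ⬝ᵥ yp ∧ y = yp + yh} := by
  have key : ∀ v : Fin n → ℝ,
      (lam • (1 : Matrix (Fin n) (Fin n) ℝ) - Matrix.diagonal D) *ᵥ v
        = lam • v - Matrix.diagonal D *ᵥ v := by
    intro v
    rw [Matrix.sub_mulVec, Matrix.smul_mulVec, Matrix.one_mulVec]
  ext y
  simp only [Set.mem_setOf_eq]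
  constructor
  · rintro ⟨hst, hnorm⟩
    refine ⟨y - yp, ?_, ?_, by ring⟩
    · rw [key] at hyp ⊢
      have : lam • y - Matrix.diagonal D *ᵥ y = -b := by
        have := hst
        rw [hnorm] at this
        have h2 : lam • y - Matrix.diagonal D *ᵥ y + b = 0 := this
        linear_combination (norm := module) h2
      rw [smul_sub, Matrix.mulVec_sub]
      linear_combination (norm := module) this - hyp
    · have hz : (lam • (1 : Matrix (Fin n) (Fin n) ℝ) - Matrix.diagonal D) *ᵥ (y - yp) = 0 := by
        rw [key]
        have : lam • y - Matrix.diagonal D *ᵥ y = -b := by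
          have h2 : lam • y - Matrix.diagonal D *ᵥ y + b = 0 := by
            rw [← hnorm]; exact hst
          linear_combination (norm := module) h2
        rw [key] at hyp
        rw [smul_sub, Matrix.mulVec_sub]
        linear_combination (norm := module) this - hyp
      have ho := horth _ hz
      have hd : yp ⬝ᵥ (y - yp) = yp ⬝ᵥ y - yp ⬝ᵥ yp := by
        simp [dotProduct_sub]
      have hyd : yp ⬝ᵥ y = yp ⬝ᵥ yp := by linarith [ho, hd.symm ▸ ho]
      have hcomm : y ⬝ᵥ yp = yp ⬝ᵥ y := dotProduct_comm _ _
      have expand : (y - yp) ⬝ᵥ (y - yp)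
          = y ⬝ᵥ y - y ⬝ᵥ yp - yp ⬝ᵥ y + yp ⬝ᵥ yp := by
        simp [dotProduct_sub, sub_dotProduct]; ring
      rw [expand, hnorm, hcomm, hyd]; ring
  · rintro ⟨yh, hker, hnorm, rfl⟩
    have ho := horth _ hker
    have hcomm : yh ⬝ᵥ yp = yp ⬝ᵥ yh := dotProduct_comm _ _
    have hnn : (yp + yh) ⬝ᵥ (yp + yh) = lam := by
      have expand : (yp + yh) ⬝ᵥ (yp + yh)
          = yp ⬝ᵥ yp + yp ⬝ᵥ yh + yh ⬝ᵥ yp + yh ⬝ᵥ yh := by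
        simp [dotProduct_add, add_dotProduct]; ring
      rw [expand, hcomm, ho, hnorm]; ring
    refine ⟨?_, hnn⟩
    rw [hnn]
    rw [key] at hyp hker
    have : lam • (yp + yh) - Matrix.diagonal D *ᵥ (yp + yh) = -b := by
      rw [smul_add, Matrix.mulVec_add]
      linear_combination (norm := module) hyp + hker
    linear_combination (norm := module) this
end

section
/- A point y ∈ ℝⁿ is a global minimizer of f (i.e. f(y) ≤ f(z) for all z ∈ ℝⁿ) if and only if ‖y‖² y − D y + b = 0 and ‖y‖² ≥ D₁, where D₁ is the largest diagonal entry of D. -/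
open Matrix

/-!
At a stationary point `y` the increment `f(y + w) - f(y)` is exactly
`(⟪y, w⟫ + ‖w‖²/2)² + ½ ∑ᵢ (‖y‖² - Dᵢ) wᵢ²`, so `‖y‖² ≥ max Dᵢ` makes `y` a global minimizer.
Conversely a global minimizer is stationary (first-order condition along the gradient), and if
`‖y‖² < Dᵢ` then moving along the `i`-th coordinate by `-2 yᵢ` (or, when `yᵢ = 0`, by
`√(Dᵢ - ‖y‖²)`) strictly decreases `f`.
-/

section DotProduct

variable {ι R : Type*} [Fintype ι] [DecidableEq ι] [CommRing R]

lemma dotProduct_diagonal_mulVec_comm (D u v : ι → R) :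
    u ⬝ᵥ (diagonal D *ᵥ v) = v ⬝ᵥ (diagonal D *ᵥ u) := by
  simp only [dotProduct, mulVec_diagonal]
  exact Finset.sum_congr rfl fun i _ => by ring

lemma mul_dotProduct_self_sub_dotProduct_diagonal_mulVec (D w : ι → R) (a : R) :
    a * (w ⬝ᵥ w) - w ⬝ᵥ (diagonal D *ᵥ w) = ∑ i, (a - D i) * w i ^ 2 := by
  simp only [dotProduct, mulVec_diagonal, Finset.mul_sum, ← Finset.sum_sub_distrib]
  exact Finset.sum_congr rfl fun i _ => by ring

end DotProduct

lemma eq_zero_of_forall_quartic_nonneg {a A B C : ℝ}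
    (h : ∀ t : ℝ, 0 ≤ a * t + A * t ^ 2 + B * t ^ 3 + C * t ^ 4) : a = 0 := by
  have hmin : IsLocalMin (fun t : ℝ => a * t + A * t ^ 2 + B * t ^ 3 + C * t ^ 4) 0 :=
    Filter.Eventually.of_forall fun t => by simpa using h t
  have hderiv : HasDerivAt (fun t : ℝ => a * t + A * t ^ 2 + B * t ^ 3 + C * t ^ 4) a 0 := by
    have := ((((hasDerivAt_id (0 : ℝ)).const_mul a).add
      ((hasDerivAt_pow 2 (0 : ℝ)).const_mul A)).add
      ((hasDerivAt_pow 3 (0 : ℝ)).const_mul B)).add ((hasDerivAt_pow 4 (0 : ℝ)).const_mul C)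
    exact this.congr_deriv (by simp)
  exact hmin.hasDerivAt_eq_zero hderiv

section Quartic

variable {n : ℕ} {D b y : Fin n → ℝ}

lemma fD_add_smul (D b y v : Fin n → ℝ) (t : ℝ) :
    fD D b (y + t • v) = fD D b y
      + (((y ⬝ᵥ y) • y - diagonal D *ᵥ y + b) ⬝ᵥ v) * t
      + ((y ⬝ᵥ v) ^ 2 + (y ⬝ᵥ y) * (v ⬝ᵥ v) / 2 - (v ⬝ᵥ (diagonal D *ᵥ v)) / 2) * t ^ 2
      + ((y ⬝ᵥ v) * (v ⬝ᵥ v)) * t ^ 3 + ((v ⬝ᵥ v) ^ 2 / 4) * t ^ 4 := by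
  simp only [fD, mulVec_add, mulVec_smul, dotProduct_add, add_dotProduct, sub_dotProduct,
    smul_dotProduct, dotProduct_smul, smul_eq_mul, dotProduct_diagonal_mulVec_comm D v y,
    dotProduct_comm v y, dotProduct_comm (diagonal D *ᵥ y)]
  ring

lemma fD_add_of_stationary (hy : (y ⬝ᵥ y) • y - diagonal D *ᵥ y + b = 0) (w : Fin n → ℝ) :
    fD D b (y + w) = fD D b y + (y ⬝ᵥ w + (w ⬝ᵥ w) / 2) ^ 2
      + (1 / 2) * ∑ i, (y ⬝ᵥ y - D i) * w i ^ 2 := by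
  have := fD_add_smul D b y w 1
  rw [one_smul, hy, zero_dotProduct] at this
  rw [this, ← mul_dotProduct_self_sub_dotProduct_diagonal_mulVec]
  ring

lemma fD_add_single_of_stationary (hy : (y ⬝ᵥ y) • y - diagonal D *ᵥ y + b = 0)
    (i : Fin n) (s : ℝ) :
    fD D b (y + Pi.single i s) = fD D b y + (y i * s + s ^ 2 / 2) ^ 2
      + (1 / 2) * ((y ⬝ᵥ y - D i) * s ^ 2) := by
  rw [fD_add_of_stationary hy, dotProduct_single, single_dotProduct, Pi.single_eq_same,
    Finset.sum_eq_single i (fun j _ hj => by simp [hj]) (by simp), Pi.single_eq_same]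
  ring

lemma stationary_of_isMinimizer (hmin : ∀ z, fD D b y ≤ fD D b z) :
    (y ⬝ᵥ y) • y - diagonal D *ᵥ y + b = 0 := by
  set g := (y ⬝ᵥ y) • y - diagonal D *ᵥ y + b
  refine dotProduct_self_eq_zero.mp (eq_zero_of_forall_quartic_nonneg
    (A := (y ⬝ᵥ g) ^ 2 + (y ⬝ᵥ y) * (g ⬝ᵥ g) / 2 - (g ⬝ᵥ (diagonal D *ᵥ g)) / 2)
    (B := (y ⬝ᵥ g) * (g ⬝ᵥ g)) (C := (g ⬝ᵥ g) ^ 2 / 4) fun t => ?_)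
  have := hmin (y + t • g)
  rw [fD_add_smul] at this
  linarith

lemma le_dotProduct_self_of_isMinimizer (hmin : ∀ z, fD D b y ≤ fD D b z) (i : Fin n) :
    D i ≤ y ⬝ᵥ y := by
  have hy := stationary_of_isMinimizer hmin
  by_contra! hlt
  by_cases hyi : y i = 0
  · have hs : Real.sqrt (D i - y ⬝ᵥ y) ^ 2 = D i - y ⬝ᵥ y := Real.sq_sqrt (by linarith)
    have := hmin (y + Pi.single i (Real.sqrt (D i - y ⬝ᵥ y)))
    rw [fD_add_single_of_stationary hy, hyi, hs] at this
    nlinarith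
  · have := hmin (y + Pi.single i (-2 * y i))
    rw [fD_add_single_of_stationary hy] at this
    have : 0 < y i ^ 2 := by positivity
    nlinarith

lemma isMinimizer_of_stationary (hy : (y ⬝ᵥ y) • y - diagonal D *ᵥ y + b = 0)
    (hD : ∀ i, D i ≤ y ⬝ᵥ y) (z : Fin n → ℝ) : fD D b y ≤ fD D b z := by
  have hsum : 0 ≤ ∑ i, (y ⬝ᵥ y - D i) * (z - y) i ^ 2 :=
    Finset.sum_nonneg fun i _ => mul_nonneg (sub_nonneg.mpr (hD i)) (sq_nonneg _)
  have := fD_add_of_stationary hy (z - y)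
  rw [add_sub_cancel] at this
  nlinarith [sq_nonneg (y ⬝ᵥ (z - y) + ((z - y) ⬝ᵥ (z - y)) / 2)]

end Quartic

theorem stmt5 {n : ℕ} (hn : 0 < n) (D b : Fin n → ℝ) (hD : Antitone D)
    (y : Fin n → ℝ) :
    (∀ z : Fin n → ℝ, fD D b y ≤ fD D b z) ↔
      ((y ⬝ᵥ y) • y - Matrix.diagonal D *ᵥ y + b = 0 ∧ D ⟨0, hn⟩ ≤ y ⬝ᵥ y) := by
  refine ⟨fun hmin => ⟨stationary_of_isMinimizer hmin,
    le_dotProduct_self_of_isMinimizer hmin _⟩, fun ⟨hy, hD₀⟩ => ?_⟩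
  exact isMinimizer_of_stationary hy fun i => (hD (Nat.zero_le i.val)).trans hD₀
end

section
/- If y ∈ ℝⁿ satisfies ‖y‖² y − D y + b = 0 and ‖y‖² > D₁, where D₁ is the largest diagonal entry of D, then y is the unique global minimizer of f; that is, f(y) ≤ f(z) for all z ∈ ℝⁿ, with equality only when z = y. -/
open Matrix

theorem stmt6 {n : ℕ} (hn : 0 < n) (D b : Fin n → ℝ) (hD : Antitone D)
    (y : Fin n → ℝ)
    (hstat : (y ⬝ᵥ y) • y - Matrix.diagonal D *ᵥ y + b = 0)
    (hgt : D ⟨0, hn⟩ < y ⬝ᵥ y) :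
    ∀ z : Fin n → ℝ, fD D b y ≤ fD D b z ∧ (fD D b z = fD D b y → z = y) := by
  intro z
  set s : ℝ := y ⬝ᵥ y with hs
  have hb : ∀ i, b i = (D i - s) * y i := by
    intro i
    have h := congrFun hstat i
    simp [Matrix.mulVec_diagonal, Pi.add_apply, Pi.sub_apply, Pi.smul_apply,
      smul_eq_mul] at h
    linarith
  have hsDpos : ∀ i, 0 < s - D i := by
    intro i
    have h1 : D i ≤ D ⟨0, hn⟩ := hD (by simp [Fin.le_def])
    linarith
  -- notation for sums
  have hsum : s = ∑ i, y i * y i := by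
    simp [hs, dotProduct]
  have hA : z ⬝ᵥ z = ∑ i, z i * z i := by simp [dotProduct]
  have hdotz : z ⬝ᵥ (Matrix.diagonal D *ᵥ z) = ∑ i, D i * (z i * z i) := by
    simp only [dotProduct, Matrix.mulVec_diagonal]
    exact Finset.sum_congr rfl fun i _ => by ring
  have hdoty : y ⬝ᵥ (Matrix.diagonal D *ᵥ y) = ∑ i, D i * (y i * y i) := by
    simp only [dotProduct, Matrix.mulVec_diagonal]
    exact Finset.sum_congr rfl fun i _ => by ring
  have hbz : b ⬝ᵥ z = ∑ i, ((D i - s) * y i) * z i := by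
    simp only [dotProduct]
    exact Finset.sum_congr rfl fun i _ => by rw [hb i]
  have hby : b ⬝ᵥ y = ∑ i, ((D i - s) * y i) * y i := by
    simp only [dotProduct]
    exact Finset.sum_congr rfl fun i _ => by rw [hb i]
  -- key identity
  have key : fD D b z - fD D b y =
      (1/4) * (z ⬝ᵥ z - s)^2 + ∑ i, (1/2) * (s - D i) * (z i - y i)^2 := by
    have expand : ∑ i, (1/2) * (s - D i) * (z i - y i)^2 =
        ∑ i, ((1/2) * (s * (z i * z i)) - s * (y i * z i)
          + (1/2) * (s * (y i * y i))
          - ((1/2) * (D i * (z i * z i)) - (D i * (y i * y i + (z i - y i) * y i))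
            + (1/2) * (D i * (y i * y i)))) :=
      Finset.sum_congr rfl fun i _ => by ring
    have sum1 : ∑ i, s * (z i * z i) = s * ∑ i, z i * z i := by
      rw [Finset.mul_sum]
    have sum2 : ∑ i, s * (y i * z i) = s * ∑ i, y i * z i := by
      rw [Finset.mul_sum]
    have sum3 : ∑ i, s * (y i * y i) = s * s := by
      rw [← Finset.mul_sum, ← hsum]
    have sum4 : ∑ i, D i * (y i * y i + (z i - y i) * y i) = ∑ i, D i * (y i * z i) := by
      exact Finset.sum_congr rfl fun i _ => by ring
    rw [expand]
    simp only [Finset.sum_sub_distrib, Finset.sum_add_distrib, ← Finset.mul_sum,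
      sum4]
    have hPle : ∑ i, ((D i - s) * y i) * z i =
        ∑ i, D i * (y i * z i) - s * ∑ i, y i * z i := by
      rw [Finset.mul_sum, ← Finset.sum_sub_distrib]
      exact Finset.sum_congr rfl fun i _ => by ring
    have hPye : ∑ i, ((D i - s) * y i) * y i =
        ∑ i, D i * (y i * y i) - s * s := by
      rw [hsum, Finset.mul_sum, ← Finset.sum_sub_distrib]
      exact Finset.sum_congr rfl fun i _ => by ring
    unfold fD
    rw [hA, hdotz, hdoty, hbz, hby, hPle, hPye, ← hs, hsum]
    ring
  have hterm_nonneg : ∀ i ∈ Finset.univ, (0:ℝ) ≤ (1/2) * (s - D i) * (z i - y i)^2 := by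
    intro i _
    have := hsDpos i
    positivity
  have hsum_nonneg : (0:ℝ) ≤ ∑ i, (1/2) * (s - D i) * (z i - y i)^2 :=
    Finset.sum_nonneg hterm_nonneg
  have hsq : (0:ℝ) ≤ (1/4) * (z ⬝ᵥ z - s)^2 := by positivity
  constructor
  · linarith
  · intro heq
    have hzero : (1/4) * (z ⬝ᵥ z - s)^2 + ∑ i, (1/2) * (s - D i) * (z i - y i)^2 = 0 := by
      rw [← key]; linarith
    have hsumzero : ∑ i, (1/2) * (s - D i) * (z i - y i)^2 = 0 := by linarith
    have := (Finset.sum_eq_zero_iff_of_nonneg hterm_nonneg).mp hsumzero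
    funext i
    have hi := this i (Finset.mem_univ i)
    have hpos := hsDpos i
    have : (z i - y i)^2 = 0 := by
      by_contra hne
      have : (0:ℝ) < (z i - y i)^2 := lt_of_le_of_ne (sq_nonneg _) (Ne.symm hne)
      nlinarith
    have := pow_eq_zero_iff (n := 2) (by norm_num) |>.mp this
    linarith
end

section
/- The matrix M has at least one real eigenvalue λ with λ ≥ D₁, where D₁ is the largest diagonal entry of D. -/
open Matrix

lemma mulVec_Mmat {n : ℕ} (D b : Fin n → ℝ) (x y : Fin n → ℝ) (t : ℝ) :
    Mmat D b *ᵥ (Sum.elim x (Sum.elim y fun _ => t)) =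
      Sum.elim (fun i => D i * x i - b i * y i)
        (Sum.elim (fun i => D i * y i - b i * t) (fun _ => ∑ i, x i)) := by
  funext j
  rcases j with i | i | i <;>
    simp [Mmat, mulVec, dotProduct, Fintype.sum_sum_type, ite_mul,
      Finset.sum_ite_eq, sub_eq_add_neg]

theorem stmt8 {n : ℕ} (hn : 0 < n) (D b : Fin n → ℝ) (hD : Antitone D) :
    ∃ lam : ℝ, D ⟨0, hn⟩ ≤ lam ∧
      ∃ v : Fin n ⊕ Fin n ⊕ Unit → ℝ, v ≠ 0 ∧ Mmat D b *ᵥ v = lam • v := by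
  set i0 : Fin n := ⟨0, hn⟩ with hi0
  have hDmax : ∀ i, D i ≤ D i0 := fun i => hD (by simp [hi0, Fin.le_def])
  by_cases hb0 : b i0 = 0
  · -- eigenvector (0, e_{i0}, 0) with eigenvalue D i0
    refine ⟨D i0, le_refl _, Sum.elim 0 (Sum.elim (Pi.single i0 1) fun _ => 0), ?_, ?_⟩
    · intro hv
      have := congrFun hv (Sum.inr (Sum.inl i0))
      simp [Pi.single_eq_same] at this
    · rw [show (0 : Fin n → ℝ) = (fun _ => 0 : Fin n → ℝ) from rfl, mulVec_Mmat]
      funext j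
      rcases j with i | i | i
      · by_cases h : i = i0 <;> simp [h, hb0, Pi.single_eq_same]
      · by_cases h : i = i0
        · subst h; simp [Pi.single_eq_same, mul_comm]
        · simp [Pi.single_eq_of_ne h]
      · simp
  · -- b i0 ≠ 0 : use IVT on h(λ) = λ - ∑ b i ^2 / (λ - D i)^2
    set S : ℝ → ℝ := fun l => ∑ i, (b i) ^ 2 / (l - D i) ^ 2 with hS
    set ε : ℝ := min 1 ((b i0) ^ 2 / (|D i0| + 2)) with hε
    have hb2 : 0 < (b i0) ^ 2 := by positivity
    have hεpos : 0 < ε := lt_min one_pos (by positivity)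
    have hε1 : ε ≤ 1 := min_le_left _ _
    set a : ℝ := D i0 + ε with ha
    set Λ : ℝ := max (D i0 + 1) ((∑ i, (b i) ^ 2) + 1) with hΛ
    have haΛ : a ≤ Λ := le_trans (by simp [ha]; linarith) (le_max_left _ _)
    have hDa : D i0 < a := by simp [ha]; linarith
    -- continuity on Icc a Λ
    have hcont : ContinuousOn (fun l => l - S l) (Set.Icc a Λ) := by
      apply ContinuousOn.sub continuousOn_id
      apply continuousOn_finset_sum
      intro i _
      apply ContinuousOn.div continuousOn_const
      · exact ((continuousOn_id.sub continuousOn_const).pow 2)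
      · intro l hl
        have : D i < l := lt_of_le_of_lt (hDmax i) (lt_of_lt_of_le hDa hl.1)
        exact pow_ne_zero 2 (sub_ne_zero.mpr (by linarith))
    -- h a ≤ 0
    have hha : a - S a ≤ 0 := by
      have h1 : (b i0) ^ 2 / ε ^ 2 ≤ S a := by
        have : (b i0) ^ 2 / (a - D i0) ^ 2 ≤ S a := by
          apply Finset.single_le_sum (f := fun i => (b i) ^ 2 / (a - D i) ^ 2)
            (fun i _ => by positivity) (Finset.mem_univ i0)
        simpa [ha] using this
      have h2 : (b i0) ^ 2 / ε ≤ (b i0) ^ 2 / ε ^ 2 := by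
        apply div_le_div_of_nonneg_left (le_of_lt hb2) (pow_pos hεpos 2)
        nlinarith
      have h3 : |D i0| + 2 ≤ (b i0) ^ 2 / ε := by
        have hεle : ε ≤ (b i0) ^ 2 / (|D i0| + 2) := min_le_right _ _
        have hpos : (0:ℝ) < |D i0| + 2 := by positivity
        rw [le_div_iff₀ hεpos]
        calc (|D i0| + 2) * ε ≤ (|D i0| + 2) * ((b i0) ^ 2 / (|D i0| + 2)) := by
              nlinarith
          _ = (b i0) ^ 2 := by field_simp
      have h4 : a ≤ |D i0| + 2 := by
        have := abs_le_abs (le_refl (D i0))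
        have := le_abs_self (D i0)
        simp [ha]; linarith
      linarith
    -- h Λ ≥ 0
    have hhΛ : 0 ≤ Λ - S Λ := by
      have h1 : S Λ ≤ ∑ i, (b i) ^ 2 := by
        apply Finset.sum_le_sum
        intro i _
        apply div_le_self (by positivity)
        have : D i ≤ D i0 := hDmax i
        have : D i0 + 1 ≤ Λ := le_max_left _ _
        nlinarith
      have h2 : (∑ i, (b i) ^ 2) + 1 ≤ Λ := le_max_right _ _
      linarith
    obtain ⟨lam, hlamIcc, hlam⟩ := intermediate_value_Icc haΛ hcont
      (Set.mem_Icc.2 ⟨hha, hhΛ⟩)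
    have hlame : lam = S lam := by
      have : lam - S lam = 0 := hlam
      linarith
    have hlamD : ∀ i, D i < lam := fun i =>
      lt_of_le_of_lt (hDmax i) (lt_of_lt_of_le hDa hlamIcc.1)
    refine ⟨lam, le_of_lt (hlamD i0), Sum.elim (fun i => (b i) ^ 2 / (D i - lam) ^ 2)
      (Sum.elim (fun i => b i / (D i - lam)) fun _ => 1), ?_, ?_⟩
    · intro hv
      have := congrFun hv (Sum.inr (Sum.inr ()))
      simp at this
    · rw [mulVec_Mmat]
      funext j
      rcases j with i | i | i
      · have hd : D i - lam ≠ 0 := by have := hlamD i; linarith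
        simp only [Sum.elim_inl, Pi.smul_apply, smul_eq_mul]
        field_simp
        ring
      · have hd : D i - lam ≠ 0 := by have := hlamD i; linarith
        simp only [Sum.elim_inr, Sum.elim_inl, Pi.smul_apply, smul_eq_mul]
        field_simp
        ring
      · simp only [Sum.elim_inr, Pi.smul_apply, smul_eq_mul, mul_one]
        have hsum : (∑ i, (b i) ^ 2 / (D i - lam) ^ 2) = S lam := by
          rw [hS]
          exact Finset.sum_congr rfl fun i _ => by
            rw [show (lam - D i) ^ 2 = (D i - lam) ^ 2 by ring]
        rw [hsum, ← hlame]
end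

section
/- Every eigenvalue λ ∈ ℂ of M (regarding M as a complex matrix) with Im λ ≠ 0 satisfies Re λ < D₁, where D₁ is the largest diagonal entry of D. -/
open Matrix

private lemma stmt10_aux {n : ℕ} (hn : 0 < n) (D b : Fin n → ℝ) (hD : Antitone D)
    (lam : ℂ)
    (x y : Fin n → ℂ) (t : ℂ)
    (e1 : ∀ i, (D i : ℂ) * x i - (b i : ℂ) * y i = lam * x i)
    (e2 : ∀ i, (D i : ℂ) * y i - (b i : ℂ) * t = lam * y i)
    (e3 : (∑ i, x i) = lam * t)
    (hv : ¬ (x = 0 ∧ y = 0 ∧ t = 0))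
    (him : lam.im ≠ 0) :
    lam.re < D ⟨0, hn⟩ := by
  by_contra hre
  push_neg at hre
  set z : Fin n → ℂ := fun i => lam - (D i : ℂ) with hz
  have hzne : ∀ i, z i ≠ 0 := by
    intro i h
    apply him
    have := congrArg Complex.im h
    simpa [hz] using this
  have hzre : ∀ i, (z i).re = lam.re - D i := by intro i; simp [hz]
  have hzim : ∀ i, (z i).im = lam.im := by intro i; simp [hz]
  have hy' : ∀ i, y i * z i = -(b i : ℂ) * t := by
    intro i; simp only [hz]; linear_combination -(e2 i)
  have hx' : ∀ i, x i * z i = -(b i : ℂ) * y i := by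
    intro i; simp only [hz]; linear_combination -(e1 i)
  have hy : ∀ i, y i = -(b i : ℂ) * t / z i := by
    intro i; rw [eq_div_iff (hzne i)]; exact hy' i
  have hx : ∀ i, x i = (b i : ℂ)^2 * t / (z i)^2 := by
    intro i; rw [eq_div_iff (pow_ne_zero 2 (hzne i))]
    linear_combination z i * hx' i + (-(b i : ℂ)) * hy' i
  have ht : t ≠ 0 := by
    intro ht0
    apply hv
    refine ⟨?_, ?_, ht0⟩
    · funext i; simp [hx i, ht0]
    · funext i; simp [hy i, ht0]
  have key : lam = ∑ i, (b i : ℂ)^2 / (z i)^2 := by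
    have h : (∑ i, (b i : ℂ)^2 / (z i)^2) * t = lam * t := by
      rw [← e3, Finset.sum_mul]
      refine Finset.sum_congr rfl fun i _ => ?_
      rw [hx i]; field_simp
    exact (mul_right_cancel₀ ht h).symm
  set S : ℝ := ∑ i, (b i)^2 * (2 * (z i).re) / Complex.normSq ((z i)^2) with hSdef
  have term : ∀ i, ((b i : ℂ)^2/(z i)^2).im
      = -((b i)^2 * (2 * (z i).re) / Complex.normSq ((z i)^2)) * lam.im := by
    intro i
    rw [div_eq_mul_inv, ← Complex.ofReal_pow, Complex.im_ofReal_mul, Complex.inv_im]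
    rw [pow_two (z i), Complex.mul_im, hzim i]
    ring
  have keyim : lam.im = -S * lam.im := by
    have h1 : lam.im = ∑ i, ((b i : ℂ)^2/(z i)^2).im := by
      conv_lhs => rw [key]
      exact Complex.im_sum _ _
    have h2 : ∑ i, ((b i : ℂ)^2/(z i)^2).im = -S * lam.im := by
      rw [hSdef, neg_mul, Finset.sum_mul, ← Finset.sum_neg_distrib]
      exact Finset.sum_congr rfl fun i _ => by rw [term i]; ring
    exact h1.trans h2
  have hSnn : 0 ≤ S := by
    apply Finset.sum_nonneg
    intro i _
    apply div_nonneg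
    · apply mul_nonneg (sq_nonneg _)
      have : D i ≤ D ⟨0, hn⟩ := hD (Fin.le_def.mpr (Nat.zero_le _))
      have := hzre i
      linarith
    · exact Complex.normSq_nonneg _
  have h0 : lam.im * (1 + S) = 0 := by linarith [keyim]
  rcases mul_eq_zero.mp h0 with h | h
  · exact him h
  · linarith

theorem stmt10 {n : ℕ} (hn : 0 < n) (D b : Fin n → ℝ) (hD : Antitone D)
    (lam : ℂ)
    (heig : ∃ v : Fin n ⊕ Fin n ⊕ Unit → ℂ, v ≠ 0 ∧
      (Mmat D b).map Complex.ofReal *ᵥ v = lam • v)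
    (him : lam.im ≠ 0) :
    lam.re < D ⟨0, hn⟩ := by
  obtain ⟨v, hvne, hmv⟩ := heig
  set x : Fin n → ℂ := fun i => v (Sum.inl i) with hxdef
  set y : Fin n → ℂ := fun i => v (Sum.inr (Sum.inl i)) with hydef
  set t : ℂ := v (Sum.inr (Sum.inr ())) with htdef
  have e1 : ∀ i, (D i : ℂ) * x i - (b i : ℂ) * y i = lam * x i := by
    intro i
    have h := congrFun hmv (Sum.inl i)
    simp only [Pi.smul_apply, smul_eq_mul] at h
    rw [← h]
    simp [Mmat, mulVec, dotProduct, Fintype.sum_sum_type, apply_ite, Finset.sum_ite_eq,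
      sub_eq_add_neg, hxdef, hydef]
  have e2 : ∀ i, (D i : ℂ) * y i - (b i : ℂ) * t = lam * y i := by
    intro i
    have h := congrFun hmv (Sum.inr (Sum.inl i))
    simp only [Pi.smul_apply, smul_eq_mul] at h
    rw [← h]
    simp [Mmat, mulVec, dotProduct, Fintype.sum_sum_type, apply_ite, Finset.sum_ite_eq,
      sub_eq_add_neg, hxdef, hydef, htdef]
  have e3 : (∑ i, x i) = lam * t := by
    have h := congrFun hmv (Sum.inr (Sum.inr ()))
    simp only [Pi.smul_apply, smul_eq_mul] at h
    rw [← h]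
    simp [Mmat, mulVec, dotProduct, Fintype.sum_sum_type, hxdef]
  have hv : ¬ (x = 0 ∧ y = 0 ∧ t = 0) := by
    rintro ⟨h1, h2, h3⟩
    apply hvne
    funext j
    rcases j with i | i | u
    · exact congrFun h1 i
    · exact congrFun h2 i
    · exact h3
  exact stmt10_aux hn D b hD lam x y t e1 e2 e3 hv him
end

section
/- The rightmost eigenvalue of M is real: there exists a real eigenvalue λ* of M such that Re μ ≤ λ* for every eigenvalue μ ∈ ℂ of M (regarding M as a complex matrix). -/
/-!
Write an eigenvector of `Mmat D b` as `(x, y, t)`. Its rows give `(μ - Dᵢ)² xᵢ = bᵢ² t` and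
`∑ xᵢ = μ t`, so an eigenvalue `μ` off the spectrum of `D` satisfies the secular equation
`μ = ∑ bᵢ² / (μ - Dᵢ)²`. As `Re (z⁻²) ≤ (Re z)⁻²`, its real part then satisfies
`Re μ ≤ ∑ bᵢ² / (Re μ - Dᵢ)²`, i.e. `P (Re μ) ≤ 0` for the characteristic polynomial `P`;
this also holds trivially when `Re μ` is some `Dᵢ`. Since `P ≤ 0` at `0` and `P > 0` far to the
right, `P` has a largest real zero `λ*` bounding every point where `P ≤ 0`, and every real zero of
`P` carries a real eigenvector.
-/

open Matrix

open Finset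

section

variable {n : ℕ} (D b : Fin n → ℝ)

def blockVec {R : Type*} (x y : Fin n → R) (t : R) : Fin n ⊕ Fin n ⊕ Unit → R :=
  Sum.elim x (Sum.elim y fun _ => t)

theorem map_mmat_mulVec_blockVec_eq_smul_iff {R : Type*} [Ring R] (f : ℝ →+* R)
    (x y : Fin n → R) (t μ : R) :
    (Mmat D b).map f *ᵥ blockVec x y t = μ • blockVec x y t ↔
      (∀ i, f (D i) * x i - f (b i) * y i = μ * x i) ∧
      (∀ i, f (D i) * y i - f (b i) * t = μ * y i) ∧
      ∑ i, x i = μ * t := by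
  simp [funext_iff, Sum.forall, blockVec, Mmat, mulVec, dotProduct, Fintype.sum_sum_type,
    apply_ite f, ite_mul, sub_eq_add_neg]

theorem mmat_mulVec_blockVec_eq_smul_iff (x y : Fin n → ℝ) (t l : ℝ) :
    Mmat D b *ᵥ blockVec x y t = l • blockVec x y t ↔
      (∀ i, D i * x i - b i * y i = l * x i) ∧
      (∀ i, D i * y i - b i * t = l * y i) ∧
      ∑ i, x i = l * t :=
  map_mmat_mulVec_blockVec_eq_smul_iff D b (RingHom.id ℝ) x y t l

theorem blockVec_eq_zero_iff {R : Type*} [Zero R] (x y : Fin n → R) (t : R) :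
    blockVec x y t = 0 ↔ x = 0 ∧ y = 0 ∧ t = 0 := by
  simp [funext_iff, Sum.forall, blockVec]

theorem exists_eq_blockVec {R : Type*} (w : Fin n ⊕ Fin n ⊕ Unit → R) :
    ∃ x y t, w = blockVec x y t :=
  ⟨_, _, w (.inr (.inr ())), by ext (i | i | ⟨⟩) <;> rfl⟩

/-- `det (x • 1 - Mmat D b)`, by a Schur complement when no `D i` equals `x`. -/
noncomputable def secularPoly (x : ℝ) : ℝ :=
  x * ∏ i, (x - D i) ^ 2 - ∑ i, b i ^ 2 * ∏ j ∈ univ.erase i, (x - D j) ^ 2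

theorem secularPoly_le (x : ℝ) : secularPoly D b x ≤ x * ∏ i, (x - D i) ^ 2 := by
  have : 0 ≤ ∑ i, b i ^ 2 * ∏ j ∈ univ.erase i, (x - D j) ^ 2 := by positivity
  unfold secularPoly
  linarith

theorem secularPoly_eq_prod_mul {x : ℝ} (hx : ∀ i, x ≠ D i) :
    secularPoly D b x = (∏ i, (x - D i) ^ 2) * (x - ∑ i, b i ^ 2 / (x - D i) ^ 2) := by
  have hterm : ∀ i, (∏ j, (x - D j) ^ 2) * (b i ^ 2 / (x - D i) ^ 2)
      = b i ^ 2 * ∏ j ∈ univ.erase i, (x - D j) ^ 2 := by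
    intro i
    rw [← mul_prod_erase univ _ (mem_univ i)]
    field_simp [sub_ne_zero.2 (hx i)]
  rw [secularPoly, mul_sub, mul_sum, sum_congr rfl fun i _ => hterm i, mul_comm]

theorem secularPoly_pos {x : ℝ} (hx : ∑ i, b i ^ 2 + ∑ i, |D i| + 1 ≤ x) :
    0 < secularPoly D b x := by
  have hgap : ∀ i, 1 ≤ x - D i := fun i => by
    have := (le_abs_self (D i)).trans (single_le_sum (fun j _ => abs_nonneg (D j)) (mem_univ i))
    have : 0 ≤ ∑ i, b i ^ 2 := by positivity
    linarith
  have hx' : ∀ i, x ≠ D i := fun i => by linarith [hgap i]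
  have hsum : ∑ i, b i ^ 2 / (x - D i) ^ 2 ≤ ∑ i, b i ^ 2 :=
    sum_le_sum fun i _ => div_le_self (sq_nonneg _) (one_le_pow₀ (hgap i))
  rw [secularPoly_eq_prod_mul D b hx']
  have : 0 < ∏ i, (x - D i) ^ 2 := prod_pos fun i _ => by nlinarith [hgap i]
  have : 0 ≤ ∑ i, |D i| := by positivity
  exact mul_pos ‹_› (by linarith)

theorem exists_zero_mem_upperBounds_setOf_nonpos {f : ℝ → ℝ} (hf : Continuous f) {a R : ℝ}
    (ha : f a ≤ 0) (hR : ∀ x, R ≤ x → 0 < f x) :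
    ∃ l, f l = 0 ∧ l ∈ upperBounds {x | f x ≤ 0} := by
  set S := {x | f x ≤ 0}
  have hbdd : ∀ x ∈ S, x < R := fun x hx => not_le.1 fun h => (hR x h).not_ge hx
  have hSbdd : BddAbove S := ⟨R, fun x hx => (hbdd x hx).le⟩
  have hl : sSup S ∈ S := (isClosed_le hf continuous_const).csSup_mem ⟨a, ha⟩ hSbdd
  refine ⟨sSup S, (eq_or_lt_of_le hl).resolve_right fun hlt => ?_, fun x hx => le_csSup hSbdd hx⟩
  -- a sign change to the right of `sSup S` would produce a larger zero
  obtain ⟨y, hy, hy0⟩ := intermediate_value_Ioo (hbdd _ hl).le hf.continuousOn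
    ⟨hlt, hR R le_rfl⟩
  exact (le_csSup hSbdd (show y ∈ S from hy0.le)).not_gt hy.1

theorem Complex.re_inv_sq_le {z : ℂ} (hz : z.re ≠ 0) : ((z ^ 2)⁻¹).re ≤ (z.re ^ 2)⁻¹ := by
  have hns : Complex.normSq (z ^ 2) = (z.re ^ 2 + z.im ^ 2) ^ 2 := by
    rw [map_pow, Complex.normSq_apply]; ring
  have hre : (z ^ 2).re = z.re ^ 2 - z.im ^ 2 := by simp [pow_two]
  rw [Complex.inv_re, hns, hre, div_le_iff₀ (by positivity)]
  have : 0 < z.re ^ 2 := by positivity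
  rw [← div_eq_inv_mul, le_div_iff₀ this]
  nlinarith [sq_nonneg (z.re * z.im), sq_nonneg z.im, sq_nonneg (z.im ^ 2)]

theorem eq_sum_div_of_map_mmat_mulVec_eq_smul {μ : ℂ} (hμ : ∀ i, μ ≠ D i)
    {w : Fin n ⊕ Fin n ⊕ Unit → ℂ} (hw : w ≠ 0)
    (h : (Mmat D b).map Complex.ofReal *ᵥ w = μ • w) :
    μ = ∑ i, (b i : ℂ) ^ 2 / (μ - D i) ^ 2 := by
  obtain ⟨x, y, t, rfl⟩ := exists_eq_blockVec w
  obtain ⟨hx, hy, ht⟩ := (map_mmat_mulVec_blockVec_eq_smul_iff D b Complex.ofRealHom x y t μ).1 h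
  simp only [Complex.ofRealHom_eq_coe] at hx hy
  have hμ' : ∀ i, μ - D i ≠ 0 := fun i => sub_ne_zero.2 (hμ i)
  have hyt : ∀ i, (μ - D i) * y i = -b i * t := fun i => by linear_combination -hy i
  have hxt : ∀ i, (μ - D i) ^ 2 * x i = b i ^ 2 * t := fun i => by
    linear_combination -(μ - D i) * hx i + b i * hy i
  have ht0 : t ≠ 0 := by
    rintro rfl
    have hy0 : y = 0 := funext fun i => by simpa [hμ' i] using hyt i
    have hx0 : x = 0 := funext fun i => by simpa [hμ' i] using hxt i
    exact hw (by simp [hx0, hy0, blockVec_eq_zero_iff])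
  apply mul_right_cancel₀ ht0
  rw [← ht, sum_mul]
  refine sum_congr rfl fun i _ => ?_
  rw [div_mul_eq_mul_div, eq_div_iff (pow_ne_zero 2 (hμ' i)), mul_comm, hxt]

theorem secularPoly_re_nonpos {μ : ℂ} {w : Fin n ⊕ Fin n ⊕ Unit → ℂ} (hw : w ≠ 0)
    (h : (Mmat D b).map Complex.ofReal *ᵥ w = μ • w) :
    secularPoly D b μ.re ≤ 0 := by
  by_cases hD : ∃ k, μ.re = D k
  · obtain ⟨k, hk⟩ := hD
    refine (secularPoly_le D b _).trans_eq ?_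
    rw [prod_eq_zero (mem_univ k) (by rw [hk, sub_self, sq]; exact zero_mul _), mul_zero]
  push Not at hD
  have hsec := congrArg Complex.re <| eq_sum_div_of_map_mmat_mulVec_eq_smul D b
    (fun i hi => hD i (by simp [hi])) hw h
  have hle : μ.re ≤ ∑ i, b i ^ 2 / (μ.re - D i) ^ 2 := by
    refine hsec.trans_le ?_
    rw [Complex.re_sum]
    refine sum_le_sum fun i _ => ?_
    have hre : (μ - D i).re = μ.re - D i := by simp
    rw [div_eq_mul_inv, div_eq_mul_inv, ← Complex.ofReal_pow, Complex.re_ofReal_mul, ← hre]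
    exact mul_le_mul_of_nonneg_left
      (Complex.re_inv_sq_le (by rw [hre]; exact sub_ne_zero.2 (hD i))) (sq_nonneg _)
  rw [secularPoly_eq_prod_mul D b hD]
  exact mul_nonpos_of_nonneg_of_nonpos (by positivity) (sub_nonpos.2 hle)

theorem mmat_mulVec_blockVec_single_eq_smul {k : Fin n} {l : ℝ} (hk : D k = l) (hb : b k = 0) :
    Mmat D b *ᵥ blockVec 0 (Pi.single k 1) 0 = l • blockVec 0 (Pi.single k 1) 0 := by
  rw [mmat_mulVec_blockVec_eq_smul_iff]
  refine ⟨fun i => ?_, fun i => ?_, by simp⟩ <;> rcases eq_or_ne i k with rfl | hik <;> simp_all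

theorem mmat_mulVec_blockVec_single_sub_single_eq_smul {j k : Fin n} {l : ℝ} (hj : D j = l)
    (hk : D k = l) :
    Mmat D b *ᵥ blockVec (Pi.single k 1 - Pi.single j 1) 0 0 =
      l • blockVec (Pi.single k 1 - Pi.single j 1) 0 0 := by
  rw [mmat_mulVec_blockVec_eq_smul_iff]
  refine ⟨fun i => ?_, fun i => by simp, by simp [sum_sub_distrib]⟩
  rcases eq_or_ne i k with rfl | hik <;> rcases eq_or_ne i j with rfl | hij <;> simp_all

theorem mmat_mulVec_secularVec_eq_smul {l : ℝ} (hD : ∀ i, l - D i ≠ 0)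
    (hl : l = ∑ i, b i ^ 2 / (l - D i) ^ 2) :
    Mmat D b *ᵥ blockVec (fun i => b i ^ 2 / (l - D i) ^ 2) (fun i => -b i / (l - D i)) 1 =
      l • blockVec (fun i => b i ^ 2 / (l - D i) ^ 2) (fun i => -b i / (l - D i)) 1 := by
  rw [mmat_mulVec_blockVec_eq_smul_iff]
  refine ⟨fun i => ?_, fun i => ?_, by rw [mul_one, ← hl]⟩ <;> field_simp [hD i] <;> ring

theorem exists_mmat_mulVec_eq_smul_of_secularPoly_eq_zero {l : ℝ} (hl : secularPoly D b l = 0) :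
    ∃ v, v ≠ 0 ∧ Mmat D b *ᵥ v = l • v := by
  by_cases hD : ∃ k, D k = l
  · obtain ⟨k, hk⟩ := hD
    have hsum : ∑ i, b i ^ 2 * ∏ j ∈ univ.erase i, (l - D j) ^ 2 = 0 := by
      rwa [secularPoly, prod_eq_zero (mem_univ k) (by simp [hk]), mul_zero, zero_sub,
        neg_eq_zero] at hl
    have hterm := (sum_eq_zero_iff_of_nonneg fun i _ => by positivity).1 hsum k (mem_univ k)
    rcases mul_eq_zero.1 hterm with hb | hprod
    · exact ⟨_, by simp [blockVec_eq_zero_iff],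
        mmat_mulVec_blockVec_single_eq_smul D b hk (pow_eq_zero_iff two_ne_zero |>.1 hb)⟩
    · obtain ⟨j, hj, hjl⟩ := prod_eq_zero_iff.1 hprod
      have hjl : D j = l := by linarith [pow_eq_zero_iff (n := 2) two_ne_zero |>.1 hjl]
      refine ⟨_, fun h => ?_, mmat_mulVec_blockVec_single_sub_single_eq_smul D b hjl hk⟩
      simpa [(ne_of_mem_erase hj).symm] using congrFun ((blockVec_eq_zero_iff _ _ _).1 h).1 k
  push Not at hD
  have hD' : ∀ i, l - D i ≠ 0 := fun i => sub_ne_zero.2 (hD i).symm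
  rw [secularPoly_eq_prod_mul D b fun i => (hD i).symm] at hl
  have hsec := (mul_eq_zero.1 hl).resolve_left (prod_ne_zero_iff.2 fun i _ => pow_ne_zero 2 (hD' i))
  exact ⟨_, by simp [blockVec_eq_zero_iff],
    mmat_mulVec_secularVec_eq_smul D b hD' (sub_eq_zero.1 hsec)⟩

end

theorem stmt11_general {n : ℕ} (D b : Fin n → ℝ) :
    ∃ lstar : ℝ,
      (∃ v : Fin n ⊕ Fin n ⊕ Unit → ℝ, v ≠ 0 ∧ Mmat D b *ᵥ v = lstar • v) ∧
      ∀ mu : ℂ,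
        (∃ w : Fin n ⊕ Fin n ⊕ Unit → ℂ, w ≠ 0 ∧
          (Mmat D b).map Complex.ofReal *ᵥ w = mu • w) → mu.re ≤ lstar := by
  obtain ⟨l, hl, hbound⟩ := exists_zero_mem_upperBounds_setOf_nonpos
    (by unfold secularPoly; fun_prop) ((secularPoly_le D b 0).trans_eq (zero_mul _))
    fun _ => secularPoly_pos D b
  exact ⟨l, exists_mmat_mulVec_eq_smul_of_secularPoly_eq_zero D b hl,
    fun μ ⟨w, hw, h⟩ => mem_upperBounds.1 hbound _ (secularPoly_re_nonpos D b hw h)⟩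

theorem stmt11 {n : ℕ} (hn : 0 < n) (D b : Fin n → ℝ) (hD : Antitone D) :
    ∃ lstar : ℝ,
      (∃ v : Fin n ⊕ Fin n ⊕ Unit → ℝ, v ≠ 0 ∧ Mmat D b *ᵥ v = lstar • v) ∧
      ∀ mu : ℂ,
        (∃ w : Fin n ⊕ Fin n ⊕ Unit → ℂ, w ≠ 0 ∧
          (Mmat D b).map Complex.ofReal *ᵥ w = mu • w) → mu.re ≤ lstar :=
  stmt11_general D b
end

section
/- Let λ = α + βi with α, β ∈ ℝ, β > 0, and α ≥ D_k for all k = 1, …, n. Then Im(λ − Σ_{k=1}ⁿ b_k²/(λ − D_k)²) ≥ β > 0; in particular, λ ≠ Σ_{k=1}ⁿ b_k²/(λ − D_k)². -/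
open Matrix

theorem stmt13 {n : ℕ} (hn : 0 < n) (D b : Fin n → ℝ) (hD : Antitone D)
    (α β : ℝ) (hβ : 0 < β) (hα : ∀ k : Fin n, D k ≤ α) :
    β ≤ (((α : ℂ) + β * Complex.I)
          - ∑ k : Fin n, (b k : ℂ)^2 / (((α : ℂ) + β * Complex.I) - (D k : ℂ))^2).im ∧
      ((α : ℂ) + β * Complex.I)
        ≠ ∑ k : Fin n, (b k : ℂ)^2 / (((α : ℂ) + β * Complex.I) - (D k : ℂ))^2 := by

  have key : ∀ k : Fin n, ((b k : ℂ)^2 / (((α : ℂ) + β * Complex.I) - (D k : ℂ))^2).im ≤ 0 := by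
    intro k
    set w : ℂ := (((α : ℂ) + β * Complex.I) - (D k : ℂ))^2 with hw
    have hwim : 0 ≤ w.im := by
      have h1 : w.im = 2 * (α - D k) * β := by
        simp [hw, sq, Complex.mul_im, Complex.sub_im, Complex.sub_re, Complex.add_re,
          Complex.add_im, Complex.mul_re, Complex.mul_im]
        ring
      rw [h1]
      nlinarith [hα k, hβ.le]
    rw [Complex.div_im]
    have h2 : ((b k : ℂ)^2).im = 0 := by
      simp [sq, Complex.mul_im]
    have h3 : ((b k : ℂ)^2).re = (b k)^2 := by
      simp [sq, Complex.mul_re]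
    rw [h2, h3]
    have : 0 ≤ (b k)^2 * w.im / Complex.normSq w :=
      div_nonneg (mul_nonneg (sq_nonneg _) hwim) (Complex.normSq_nonneg w)
    simp only [zero_mul, zero_div, zero_sub]
    linarith
  have hsum : (∑ k : Fin n, (b k : ℂ)^2 / (((α : ℂ) + β * Complex.I) - (D k : ℂ))^2).im ≤ 0 := by
    rw [Complex.im_sum]
    exact Finset.sum_nonpos fun k _ => key k
  have him : β ≤ (((α : ℂ) + β * Complex.I)
      - ∑ k : Fin n, (b k : ℂ)^2 / (((α : ℂ) + β * Complex.I) - (D k : ℂ))^2).im := by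
    rw [Complex.sub_im]
    have : ((α : ℂ) + β * Complex.I).im = β := by simp
    rw [this]
    linarith
  refine ⟨him, ?_⟩
  intro h
  have h0 : ((α : ℂ) + β * Complex.I)
      - ∑ k : Fin n, (b k : ℂ)^2 / (((α : ℂ) + β * Complex.I) - (D k : ℂ))^2 = 0 :=
    sub_eq_zero.mpr h
  rw [h0] at him
  simp at him
  linarith
end

section
/- If λ ∈ ℝ is such that λI − D is invertible and λ = Σ_{k=1}ⁿ b_k²/(λ − D_k)², then λ is an eigenvalue of M. -/
open Matrix

section DiagonalShift

variable {R ι : Type*} [CommRing R] [DecidableEq ι]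

lemma smul_one_sub_diagonal (lam : R) (D : ι → R) :
    lam • (1 : Matrix ι ι R) - diagonal D = diagonal fun i => lam - D i := by
  rw [smul_one_eq_diagonal, diagonal_sub]

lemma sub_ne_zero_of_isUnit_smul_one_sub_diagonal [Fintype ι] [Nontrivial R]
    {lam : R} {D : ι → R} (h : IsUnit (lam • (1 : Matrix ι ι R) - diagonal D)) (k : ι) :
    lam - D k ≠ 0 := by
  rw [smul_one_sub_diagonal, isUnit_diagonal, Pi.isUnit_iff] at h
  exact (h k).ne_zero

end DiagonalShift

section Mmat

variable {n : ℕ} (D b : Fin n → ℝ) (v : Fin n ⊕ Fin n ⊕ Unit → ℝ)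

lemma Mmat_mulVec_inl (i : Fin n) :
    (Mmat D b *ᵥ v) (Sum.inl i) = D i * v (Sum.inl i) - b i * v (Sum.inr (Sum.inl i)) := by
  simp [Mmat, mulVec, dotProduct, Fintype.sum_sum_type, ite_mul, sub_eq_add_neg]

lemma Mmat_mulVec_inr_inl (i : Fin n) :
    (Mmat D b *ᵥ v) (Sum.inr (Sum.inl i)) =
      D i * v (Sum.inr (Sum.inl i)) - b i * v (Sum.inr (Sum.inr ())) := by
  simp [Mmat, mulVec, dotProduct, Fintype.sum_sum_type, ite_mul, sub_eq_add_neg]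

lemma Mmat_mulVec_inr_inr (u : Unit) :
    (Mmat D b *ᵥ v) (Sum.inr (Sum.inr u)) = ∑ i, v (Sum.inl i) := by
  simp [Mmat, mulVec, dotProduct, Fintype.sum_sum_type]

end Mmat

/-- The vector `(y ∘ y, y, 1)` with `y = (λI − D)⁻¹(−b)`; the last row of `M` applied to it
is the secular equation `λ = ∑ bₖ² / (λ − Dₖ)²`. -/
noncomputable def secularEigenvector {n : ℕ} (D b : Fin n → ℝ) (lam : ℝ) :
    Fin n ⊕ Fin n ⊕ Unit → ℝ
  | Sum.inl i => b i ^ 2 / (lam - D i) ^ 2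
  | Sum.inr (Sum.inl i) => -b i / (lam - D i)
  | Sum.inr (Sum.inr _) => 1

lemma secularEigenvector_ne_zero {n : ℕ} (D b : Fin n → ℝ) (lam : ℝ) :
    secularEigenvector D b lam ≠ 0 :=
  fun h => one_ne_zero (congrFun h (Sum.inr (Sum.inr ())))

lemma Mmat_mulVec_secularEigenvector {n : ℕ} {D b : Fin n → ℝ} {lam : ℝ}
    (hne : ∀ k, lam - D k ≠ 0) (hsum : lam = ∑ k, b k ^ 2 / (lam - D k) ^ 2) :
    Mmat D b *ᵥ secularEigenvector D b lam = lam • secularEigenvector D b lam := by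
  funext j
  rcases j with i | i | u
  · rw [Mmat_mulVec_inl]
    simp only [secularEigenvector, Pi.smul_apply, smul_eq_mul]
    field_simp [hne i]
    ring
  · rw [Mmat_mulVec_inr_inl]
    simp only [secularEigenvector, Pi.smul_apply, smul_eq_mul]
    field_simp [hne i]
    ring
  · rw [Mmat_mulVec_inr_inr]
    simpa [secularEigenvector] using hsum.symm

theorem stmt14_general {n : ℕ} (D b : Fin n → ℝ)
    (lam : ℝ)
    (hinv : IsUnit (lam • (1 : Matrix (Fin n) (Fin n) ℝ) - Matrix.diagonal D))
    (hsum : lam = ∑ k : Fin n, (b k)^2 / (lam - D k)^2) :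
    ∃ v : Fin n ⊕ Fin n ⊕ Unit → ℝ, v ≠ 0 ∧ Mmat D b *ᵥ v = lam • v :=
  ⟨secularEigenvector D b lam, secularEigenvector_ne_zero D b lam,
    Mmat_mulVec_secularEigenvector (sub_ne_zero_of_isUnit_smul_one_sub_diagonal hinv) hsum⟩

theorem stmt14 {n : ℕ} (hn : 0 < n) (D b : Fin n → ℝ) (hD : Antitone D)
    (lam : ℝ)
    (hinv : IsUnit (lam • (1 : Matrix (Fin n) (Fin n) ℝ) - Matrix.diagonal D))
    (hsum : lam = ∑ k : Fin n, (b k)^2 / (lam - D k)^2) :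
    ∃ v : Fin n ⊕ Fin n ⊕ Unit → ℝ, v ≠ 0 ∧ Mmat D b *ᵥ v = lam • v :=
  stmt14_general D b lam hinv hsum
end

section
/- The gradient of h at every x ∈ ℝⁿ equals ∇h(x) = ‖x‖² x + (Σ_{i=1}^m Σ_{j=1}^m w_ij (2 s_j s_iᵀ + (s_iᵀ s_i − d_i²) I)) x − Σ_{i=1}^m Σ_{j=1}^m w_ij (s_iᵀ s_i − d_i²) s_j; that is, under the normalization and centering assumptions on the weights and senders, the cubic term of ∇h has coefficient 1 and the quadratic term vanishes. -/
/-!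
Write `fᵢ x = ‖x - sᵢ‖² - dᵢ²`, whose gradient is `2 (x - sᵢ)`. Since `W` is symmetric, the
product rule gives `∇h x = ∑ᵢⱼ wᵢⱼ fᵢ(x) (x - sⱼ)`. Expanding `fᵢ x = ‖x‖² - 2⟪sᵢ, x⟫ + ‖sᵢ‖² - dᵢ²`,
the normalization `∑ wᵢⱼ = 1` makes the cubic term `‖x‖² x`, and the centering
`∑ wᵢⱼ sᵢ = 0` (hence also `∑ wᵢⱼ sⱼ = 0`, by symmetry) kills the quadratic terms
`‖x‖² ∑ wᵢⱼ sⱼ` and `⟪∑ wᵢⱼ sᵢ, x⟫ x`.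
-/

open RealInnerProductSpace

section GradientCalculus

variable {F : Type*} [NormedAddCommGroup F] [InnerProductSpace ℝ F] [CompleteSpace F]
  {f g : F → ℝ} {f' g' x : F}

theorem HasGradientAt.mul (hf : HasGradientAt f f' x) (hg : HasGradientAt g g' x) :
    HasGradientAt (fun y => f y * g y) (f x • g' + g x • f') x := by
  rw [hasGradientAt_iff_hasFDerivAt, map_add, map_smul, map_smul]
  exact hf.hasFDerivAt.mul hg.hasFDerivAt

theorem HasGradientAt.const_mul (c : ℝ) (hf : HasGradientAt f f' x) :
    HasGradientAt (fun y => c * f y) (c • f') x := by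
  rw [hasGradientAt_iff_hasFDerivAt, map_smul]
  exact hf.hasFDerivAt.const_mul c

theorem HasGradientAt.fun_sum {ι : Type*} (u : Finset ι) {f : ι → F → ℝ} {f' : ι → F}
    (hf : ∀ i ∈ u, HasGradientAt (f i) (f' i) x) :
    HasGradientAt (fun y => ∑ i ∈ u, f i y) (∑ i ∈ u, f' i) x := by
  rw [hasGradientAt_iff_hasFDerivAt, map_sum]
  exact HasFDerivAt.fun_sum fun i hi => (hf i hi).hasFDerivAt

theorem hasGradientAt_norm_sub_sq_sub (a x : F) (r : ℝ) :
    HasGradientAt (fun y => ‖y - a‖ ^ 2 - r) ((2 : ℝ) • (x - a)) x := by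
  rw [hasGradientAt_iff_hasFDerivAt]
  refine (((hasFDerivAt_id x).sub_const a).norm_sq.sub_const r).congr_fderiv ?_
  ext v
  simp

theorem HasGradientAt.sum_sum_mul_of_symm {ι : Type*} [Fintype ι] {w : ι → ι → ℝ}
    (hw : ∀ i j, w i j = w j i) {f : ι → F → ℝ} {f' : ι → F}
    (hf : ∀ i, HasGradientAt (f i) (f' i) x) :
    HasGradientAt (fun y => ∑ i, ∑ j, w i j * (f i y * f j y))
      (∑ i, ∑ j, (2 * w i j * f i x) • f' j) x := by
  have h := HasGradientAt.fun_sum Finset.univ fun i _ =>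
    HasGradientAt.fun_sum Finset.univ fun j _ => ((hf i).mul (hf j)).const_mul (w i j)
  convert h using 1
  have hswap : ∑ i, ∑ j, (w i j * f j x) • f' i = ∑ i, ∑ j, (w i j * f i x) • f' j := by
    rw [Finset.sum_comm]
    simp only [hw]
  simp only [smul_add, smul_smul, Finset.sum_add_distrib, hswap, ← two_smul ℝ, Finset.smul_sum]
  refine Finset.sum_congr rfl fun i _ => Finset.sum_congr rfl fun j _ => ?_
  module

end GradientCalculus

theorem sum_sum_smul_sub_eq_of_centered {F ι : Type*} [NormedAddCommGroup F]
    [InnerProductSpace ℝ F] [Fintype ι] {w : ι → ι → ℝ} {s : ι → F}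
    (hw : ∀ i j, w i j = w j i) (hnorm : ∑ i, ∑ j, w i j = 1)
    (hcent : ∑ i, ∑ j, w i j • s i = 0) (c : ι → ℝ) (x : F) :
    ∑ i, ∑ j, (w i j * (‖x‖ ^ 2 - 2 * ⟪s i, x⟫ + c i)) • (x - s j)
      = ‖x‖ ^ 2 • x + ∑ i, ∑ j, w i j • ((2 * ⟪s i, x⟫) • s j + c i • x)
        - ∑ i, ∑ j, (w i j * c i) • s j := by
  have hcent' : ∑ i, ∑ j, w i j • s j = 0 := by
    rw [Finset.sum_comm]
    simpa only [hw] using hcent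
  have hinner : ∑ i, ∑ j, w i j * ⟪s i, x⟫ = 0 := by
    simpa only [sum_inner, real_inner_smul_left, inner_zero_left] using
      congrArg (⟪·, x⟫) hcent
  calc ∑ i, ∑ j, (w i j * (‖x‖ ^ 2 - 2 * ⟪s i, x⟫ + c i)) • (x - s j)
      = ∑ i, ∑ j, (w i j • ((2 * ⟪s i, x⟫) • s j + c i • x) - (w i j * c i) • s j
          + (‖x‖ ^ 2 * w i j) • x - ‖x‖ ^ 2 • (w i j • s j) - (2 * (w i j * ⟪s i, x⟫)) • x) :=
        Finset.sum_congr rfl fun i _ => Finset.sum_congr rfl fun j _ => by module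
    _ = ‖x‖ ^ 2 • x + ∑ i, ∑ j, w i j • ((2 * ⟪s i, x⟫) • s j + c i • x)
          - ∑ i, ∑ j, (w i j * c i) • s j := by
        simp only [Finset.sum_add_distrib, Finset.sum_sub_distrib, ← Finset.smul_sum,
          ← Finset.sum_smul, ← Finset.mul_sum, hnorm, hcent', hinner]
        module

theorem stmt17_general {n m : ℕ}
    (s : Fin m → EuclideanSpace ℝ (Fin n)) (d : Fin m → ℝ)
    (w : Fin m → Fin m → ℝ)
    (hsym : ∀ i j, w i j = w j i)
    (hnorm : ∑ i : Fin m, ∑ j : Fin m, w i j = 1)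
    (hcent : ∑ i : Fin m, ∑ j : Fin m, w i j • s i = 0) :
    ∀ x : EuclideanSpace ℝ (Fin n),
      gradient (fun x : EuclideanSpace ℝ (Fin n) =>
          (1/4) * ∑ i : Fin m, ∑ j : Fin m,
            w i j * ((‖x - s i‖^2 - (d i)^2) * (‖x - s j‖^2 - (d j)^2))) x
        = ‖x‖^2 • x
          + ∑ i : Fin m, ∑ j : Fin m,
              w i j • ((2 * ⟪s i, x⟫) • s j + (⟪s i, s i⟫ - (d i)^2) • x)
          - ∑ i : Fin m, ∑ j : Fin m,
              (w i j * (⟪s i, s i⟫ - (d i)^2)) • s j := by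
  intro x
  have hsphere i := hasGradientAt_norm_sub_sq_sub (s i) x (d i ^ 2)
  rw [((HasGradientAt.sum_sum_mul_of_symm hsym hsphere).const_mul (1 / 4)).gradient,
    ← sum_sum_smul_sub_eq_of_centered hsym hnorm hcent]
  simp only [Finset.smul_sum]
  refine Finset.sum_congr rfl fun i _ => Finset.sum_congr rfl fun j _ => ?_
  rw [norm_sub_sq_real, real_inner_self_eq_norm_sq, real_inner_comm]
  module

theorem stmt17 {n m : ℕ} (hn : 0 < n) (hm : 0 < m)
    (s : Fin m → EuclideanSpace ℝ (Fin n)) (d : Fin m → ℝ)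
    (w : Fin m → Fin m → ℝ)
    (hsym : ∀ i j, w i j = w j i)
    (hnorm : ∑ i : Fin m, ∑ j : Fin m, w i j = 1)
    (hcent : ∑ i : Fin m, ∑ j : Fin m, w i j • s i = 0) :
    ∀ x : EuclideanSpace ℝ (Fin n),
      gradient (fun x : EuclideanSpace ℝ (Fin n) =>
          (1/4) * ∑ i : Fin m, ∑ j : Fin m,
            w i j * ((‖x - s i‖^2 - (d i)^2) * (‖x - s j‖^2 - (d j)^2))) x
        = ‖x‖^2 • x
          + ∑ i : Fin m, ∑ j : Fin m,
              w i j • ((2 * ⟪s i, x⟫) • s j + (⟪s i, s i⟫ - (d i)^2) • x)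
          - ∑ i : Fin m, ∑ j : Fin m,
              (w i j * (⟪s i, s i⟫ - (d i)^2)) • s j :=
  stmt17_general s d w hsym hnorm hcent
end

section
/- Suppose λ ∈ ℝ satisfies λ = D₁, λ ≠ D_k for k = 2, …, n, b₁ = 0, and λ − Σ_{k=2}ⁿ b_k²/(λ − D_k)² ≥ 0. Define y ∈ ℝⁿ by y_k = −b_k/(λ − D_k) for k = 2, …, n and y₁ = ±√(λ − Σ_{k=2}ⁿ y_k²). Then for either choice of sign, y satisfies ‖y‖² y − D y + b = 0 and ‖y‖² = λ; that is, both points are stationary points of f with squared norm λ. -/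
open Matrix

theorem stmt18 {n : ℕ} (hn : 0 < n) (D b : Fin n → ℝ) (hD : Antitone D)
    (lam : ℝ)
    (hl : lam = D ⟨0, hn⟩)
    (hlk : ∀ k : Fin n, k ≠ ⟨0, hn⟩ → lam ≠ D k)
    (hb : b ⟨0, hn⟩ = 0)
    (hpos : 0 ≤ lam - ∑ k ∈ Finset.univ.filter (· ≠ (⟨0, hn⟩ : Fin n)),
      (b k / (lam - D k))^2) :
    ∀ ε : ℝ, ε = 1 ∨ ε = -1 →
      let y : Fin n → ℝ := fun k =>
        if k = ⟨0, hn⟩ then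
          ε * Real.sqrt (lam - ∑ k ∈ Finset.univ.filter (· ≠ (⟨0, hn⟩ : Fin n)),
            (b k / (lam - D k))^2)
        else -b k / (lam - D k)
      ((y ⬝ᵥ y) • y - Matrix.diagonal D *ᵥ y + b = 0) ∧ y ⬝ᵥ y = lam := by
  intro ε hε y
  set S := lam - ∑ k ∈ Finset.univ.filter (· ≠ (⟨0, hn⟩ : Fin n)),
      (b k / (lam - D k))^2 with hS
  have heps : ε^2 = 1 := by rcases hε with h | h <;> simp [h]
  have hnorm : y ⬝ᵥ y = lam := by
    rw [dotProduct]
    have h0 : ((⟨0, hn⟩ : Fin n) : Fin n) ∈ Finset.univ := Finset.mem_univ _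
    rw [← Finset.add_sum_erase _ _ h0]
    have h1 : y ⟨0, hn⟩ * y ⟨0, hn⟩ = S := by
      simp only [y, if_pos rfl, ← hS]
      rw [show ε * Real.sqrt S * (ε * Real.sqrt S) = ε^2 * (Real.sqrt S * Real.sqrt S) by ring,
        heps, Real.mul_self_sqrt hpos, one_mul]
    have h2 : ∑ k ∈ Finset.univ.erase ⟨0, hn⟩, y k * y k
        = ∑ k ∈ Finset.univ.filter (· ≠ (⟨0, hn⟩ : Fin n)), (b k / (lam - D k))^2 := by
      rw [show (Finset.univ.filter (· ≠ (⟨0, hn⟩ : Fin n))) = Finset.univ.erase ⟨0, hn⟩ by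
        ext k; simp [Finset.mem_erase, and_comm]]
      refine Finset.sum_congr rfl fun k hk => ?_
      have hk' : k ≠ ⟨0, hn⟩ := (Finset.mem_erase.mp hk).1
      simp only [y, if_neg hk']
      ring
    rw [h1, h2, hS]; ring
  refine ⟨?_, hnorm⟩
  funext k
  simp only [Pi.add_apply, Pi.sub_apply, Pi.smul_apply, smul_eq_mul, Pi.zero_apply,
    mulVec_diagonal, hnorm]
  by_cases hk : k = ⟨0, hn⟩
  · subst hk
    simp only [y, if_pos rfl]
    rw [hb, ← hl]; ring
  · simp only [y, if_neg hk]
    have := sub_ne_zero_of_ne (hlk k hk)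
    field_simp
    ring
end
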